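/- Let A be a finite-dimensional complete left-symmetric algebra over ℂ, and let H be a Cartan subalgebra of the commutator Lie algebra of A for which the root decomposition is canonical. Write A^χ = ⋂_{x∈H} maxGenEigenspace(L(x), χ(x)), and assume dim A^χ ≤ 1 for every χ : H → ℂ. Then for every e₀ ∈ A^0 one has R(e₀) = 0, i.e., x·e₀ = 0 for all x ∈ A. -/

import Mathlib

/-!
Left symmetry says that `L(x)` acts on products by `x·(a·b) = [x,a]·b + a·(x·b)`, so right
multiplication by `e₀ ∈ A^0` maps the `ad(H)`-weight space of weight `χ` into `A^χ`, and by
canonicity these two spaces coincide. Thus `R(e₀)` restricts to a nilpotent endomorphism of each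
`A^χ`, which vanishes because `dim A^χ ≤ 1`. As `H` is nilpotent, the `ad(H)`-weight spaces
span `A`, so `R(e₀) = 0`.
-/

open TensorProduct

namespace Module.End

variable {R M N : Type*} [CommRing R] [AddCommGroup M] [Module R M] [AddCommGroup N] [Module R N]

lemma map_maxGenEigenspace_le_of_comp_eq {T : End R M} {F : End R N} {G : M →ₗ[R] N}
    (hFG : F ∘ₗ G = G ∘ₗ T) (μ : R) :
    (T.maxGenEigenspace μ).map G ≤ F.maxGenEigenspace μ := by
  rintro _ ⟨a, ha, rfl⟩
  obtain ⟨k, hk⟩ := (mem_maxGenEigenspace _ _ _).mp ha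
  have hshift : (F - μ • 1) ∘ₗ G = G ∘ₗ (T - μ • 1) := by
    ext x
    simpa using congr($hFG x)
  refine (mem_maxGenEigenspace _ _ _).mpr ⟨k, ?_⟩
  rw [← LinearMap.comp_apply, commute_pow_left_of_commute hshift, LinearMap.comp_apply, hk,
    map_zero]

lemma tmul_mem_maxGenEigenspace_rTensor {f : End R M} {μ : R} {a : M} (b : N)
    (ha : a ∈ f.maxGenEigenspace μ) :
    a ⊗ₜ[R] b ∈ maxGenEigenspace (f.rTensor N) μ := by
  obtain ⟨k, hk⟩ := (mem_maxGenEigenspace _ _ _).mp ha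
  have hshift : f.rTensor N - μ • 1 = (f - μ • 1).rTensor N := by
    ext a b
    simp [smul_tmul']
  refine (mem_maxGenEigenspace _ _ _).mpr ⟨k, ?_⟩
  rw [hshift, LinearMap.rTensor_pow, LinearMap.rTensor_tmul, hk, zero_tmul]

lemma tmul_mem_maxGenEigenspace_lTensor {g : End R N} {μ : R} (a : M) {b : N}
    (hb : b ∈ g.maxGenEigenspace μ) :
    a ⊗ₜ[R] b ∈ maxGenEigenspace (g.lTensor M) μ := by
  obtain ⟨k, hk⟩ := (mem_maxGenEigenspace _ _ _).mp hb
  have hshift : g.lTensor M - μ • 1 = (g - μ • 1).lTensor M := by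
    ext a b
    simp
  refine (mem_maxGenEigenspace _ _ _).mpr ⟨k, ?_⟩
  rw [hshift, LinearMap.lTensor_pow, LinearMap.lTensor_tmul, hk, tmul_zero]

lemma tmul_mem_maxGenEigenspace_rTensor_add_lTensor {f : End R M} {g : End R N} {χ ψ : R}
    {a : M} {b : N} (ha : a ∈ f.maxGenEigenspace χ) (hb : b ∈ g.maxGenEigenspace ψ) :
    a ⊗ₜ[R] b ∈ maxGenEigenspace (f.rTensor N + g.lTensor M) (χ + ψ) := by
  have hcomm : Commute (f.rTensor N) (g.lTensor M) := by
    ext a b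
    simp
  exact genEigenspace_inf_le_add _ _ χ ψ ⊤ ⊤ hcomm
    ⟨tmul_mem_maxGenEigenspace_rTensor b ha, tmul_mem_maxGenEigenspace_lTensor a hb⟩

variable {P : Type*} [AddCommGroup P] [Module R P]

lemma apply_mem_maxGenEigenspace_add (B : M →ₗ[R] N →ₗ[R] P) {f : End R M} {g : End R N}
    {h : End R P} (hB : ∀ a b, h (B a b) = B (f a) b + B a (g b)) {χ ψ : R} {a : M} {b : N}
    (ha : a ∈ f.maxGenEigenspace χ) (hb : b ∈ g.maxGenEigenspace ψ) :
    B a b ∈ h.maxGenEigenspace (χ + ψ) := by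
  have hcomp : h ∘ₗ lift B = lift B ∘ₗ (f.rTensor N + g.lTensor M) :=
    TensorProduct.ext' fun a b => by simp [hB]
  exact map_maxGenEigenspace_le_of_comp_eq hcomp (χ + ψ)
    ⟨a ⊗ₜ b, tmul_mem_maxGenEigenspace_rTensor_add_lTensor ha hb, lift.tmul a b⟩

variable {K V : Type*} [Field K] [AddCommGroup V] [Module K V] [FiniteDimensional K V]

lemma eq_zero_of_isNilpotent_of_finrank_le_one {f : End K V} (hf : IsNilpotent f)
    (hV : finrank K V ≤ 1) : f = 0 := by
  obtain ⟨n, hn⟩ := hf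
  ext v
  have hv : v ∈ LinearMap.ker (f ^ finrank K V) :=
    ker_pow_le_ker_pow_finrank f n (by simp [hn])
  simpa using pow_map_zero_of_le hV hv

lemma le_ker_of_isNilpotent_of_finrank_le_one {f : End K V} (hf : IsNilpotent f)
    {W : Submodule K V} (hW : finrank K W ≤ 1) (hWf : Set.MapsTo f W W) :
    W ≤ LinearMap.ker f := by
  intro a ha
  have h := congr($(eq_zero_of_isNilpotent_of_finrank_le_one (isNilpotent.restrict hWf hf) hW)
    ⟨a, ha⟩)
  exact congr_arg Subtype.val h

end Module.End

open Module.End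

section LeftSymmetric

variable {R A : Type*} [CommRing R] [AddCommGroup A] [Module R A] {mul : A →ₗ[R] A →ₗ[R] A}

lemma mul_mul_eq_of_leftSymmetric
    (hls : ∀ x y z : A,
      mul x (mul y z) - mul (mul x y) z = mul y (mul x z) - mul (mul y x) z) (x a b : A) :
    mul x (mul a b) = mul (mul x a - mul a x) b + mul a (mul x b) := by
  rw [map_sub, LinearMap.sub_apply]
  linear_combination (norm := module) hls x a b

lemma mul_mem_iInf_maxGenEigenspace_add
    (hls : ∀ x y z : A,
      mul x (mul y z) - mul (mul x y) z = mul y (mul x z) - mul (mul y x) z)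
    {ι : Type*} (s : ι → A) {χ ψ : ι → R} {a b : A}
    (ha : a ∈ ⨅ i, maxGenEigenspace (mul (s i) - mul.flip (s i)) (χ i))
    (hb : b ∈ ⨅ i, maxGenEigenspace (mul (s i)) (ψ i)) :
    mul a b ∈ ⨅ i, maxGenEigenspace (mul (s i)) (χ i + ψ i) := by
  simp only [Submodule.mem_iInf] at ha hb ⊢
  exact fun i => apply_mem_maxGenEigenspace_add mul
    (mul_mul_eq_of_leftSymmetric hls (s i)) (ha i) (hb i)

end LeftSymmetric

/-- In a finite-dimensional complete left-symmetric algebra over `ℂ` whose canonical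
decomposition has all root spaces of dimension at most one, `R(e₀) = 0` for every
`e₀` in the zero root space. -/
theorem leftSymmetric_one_dimensional_R_zero (A : Type*)
    [LieRing A] [LieAlgebra ℂ A] [FiniteDimensional ℂ A]
    (mul : A →ₗ[ℂ] A →ₗ[ℂ] A)
    (hbr : ∀ x y : A, ⁅x, y⁆ = mul x y - mul y x)
    (hls : ∀ x y z : A,
      mul x (mul y z) - mul (mul x y) z = mul y (mul x z) - mul (mul y x) z)
    (hcomplete : ∀ x : A, IsNilpotent (mul.flip x))
    (H : LieSubalgebra ℂ A) (hH : H.IsCartanSubalgebra)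
    (hcanon : ∀ χ : H → ℂ,
      (⨅ x : H, Module.End.maxGenEigenspace (mul (x : A)) (χ x)) =
        ⨅ x : H, Module.End.maxGenEigenspace (mul (x : A) - mul.flip (x : A)) (χ x))
    (hdim : ∀ χ : H → ℂ,
      Module.finrank ℂ
        (⨅ x : H, Module.End.maxGenEigenspace (mul (x : A)) (χ x) : Submodule ℂ A) ≤ 1) :
    ∀ e₀ ∈ (⨅ x : H, Module.End.maxGenEigenspace (mul (x : A)) (0 : ℂ)),
      ∀ x : A, mul x e₀ = 0 := by
  intro e₀ he₀ x
  have : LieRing.IsNilpotent H := hH.nilpotent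
  have had : ∀ y : H, mul (y : A) - mul.flip (y : A) = LieModule.toEnd ℂ H A y :=
    fun y => LinearMap.ext fun a => by simp [hbr]
  have hspan : ⨆ χ : H → ℂ, ⨅ y : H, maxGenEigenspace (mul (y : A)) (χ y) = ⊤ := by
    have hweights := LieModule.iSup_genWeightSpace_eq_top ℂ H A
    simp only [← LieSubmodule.toSubmodule_inj, LieSubmodule.iSup_toSubmodule,
      LieSubmodule.iInf_toSubmodule, LieSubmodule.top_toSubmodule,
      LieModule.genWeightSpace, LieModule.genWeightSpaceOf] at hweights
    simpa only [hcanon, had] using hweights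
  have hker : ∀ χ : H → ℂ,
      ⨅ y : H, maxGenEigenspace (mul (y : A)) (χ y) ≤ LinearMap.ker (mul.flip e₀) := by
    intro χ
    refine le_ker_of_isNilpotent_of_finrank_le_one (hcomplete e₀) (hdim χ) fun a ha => ?_
    rw [SetLike.mem_coe, hcanon] at ha
    simpa using mul_mem_iInf_maxGenEigenspace_add hls (fun y : H => (y : A)) ha he₀
  simpa using (hspan ▸ iSup_le hker) (Submodule.mem_top (x := x))
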